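/- arXiv:2205.03752 — 7 statements merged into one kernel-verified Lean document; each statement's English description precedes it below -/
import Mathlib

section
/- Let X be a random vector on Δ_{K-1} and let y : [0,1] → [0,1] satisfy E[y(X_i)] = E[X_i] for each coordinate i. Define z_i = y(X_i)/∑_j y(X_j). Then E[D(X‖z)] ≤ ∑_i E[X_i log(X_i / y(X_i))]. That is, the expected normalized loss is at most the raw loss. -/
open MeasureTheory
open scoped BigOperators

/-! Since `∑ᵢ Xᵢ = 1`, normalizing `y` shifts the loss pointwise by exactly `log ∑ⱼ y(Xⱼ)`, and
`E[log ∑ⱼ y(Xⱼ)] ≤ E[∑ⱼ y(Xⱼ)] - 1 = ∑ⱼ E[Xⱼ] - 1 = 0` by `log t ≤ t - 1`. -/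

lemma sum_pos_of_sum_eq_one {ι : Type*} [Fintype ι] {x w : ι → ℝ} (hx : ∑ i, x i = 1)
    (hw : ∀ i, 0 < w i) : 0 < ∑ i, w i := by
  have : Nonempty ι := by
    by_contra h
    rw [not_nonempty_iff] at h
    simp at hx
  exact Finset.sum_pos (fun i _ => hw i) Finset.univ_nonempty

lemma sum_mul_log_div_div_sum {ι : Type*} [Fintype ι] {x w : ι → ℝ} (hx : ∀ i, 0 ≤ x i)
    (hsum : ∑ i, x i = 1) (hw : ∀ i, 0 < w i) :
    ∑ i, x i * Real.log (x i / (w i / ∑ j, w j))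
      = ∑ i, x i * Real.log (x i / w i) + Real.log (∑ j, w j) := by
  have hW := (sum_pos_of_sum_eq_one hsum hw).ne'
  have hterm : ∀ i, x i * Real.log (x i / (w i / ∑ j, w j))
      = x i * Real.log (x i / w i) + x i * Real.log (∑ j, w j) := by
    intro i
    rcases (hx i).eq_or_lt with hxi | hxi
    · simp [← hxi]
    · rw [div_div_eq_mul_div, mul_div_right_comm,
        Real.log_mul (div_pos hxi (hw i)).ne' hW, mul_add]
  rw [Finset.sum_congr rfl fun i _ => hterm i, Finset.sum_add_distrib, ← Finset.sum_mul, hsum,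
    one_mul]

lemma integral_log_le_integral_sub_one {Ω : Type*} [MeasurableSpace Ω] {μ : Measure Ω}
    [IsProbabilityMeasure μ] {f : Ω → ℝ} (hpos : ∀ᵐ ω ∂μ, 0 < f ω) (hf : Integrable f μ)
    (hlog : Integrable (fun ω => Real.log (f ω)) μ) :
    ∫ ω, Real.log (f ω) ∂μ ≤ ∫ ω, f ω ∂μ - 1 := by
  calc ∫ ω, Real.log (f ω) ∂μ ≤ ∫ ω, (f ω - 1) ∂μ :=
        integral_mono_ae hlog (hf.sub (integrable_const 1)) <| by
          filter_upwards [hpos] with ω hω using Real.log_le_sub_one_of_pos hω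
    _ = ∫ ω, f ω ∂μ - 1 := by simp [integral_sub hf (integrable_const 1)]

/-- Expected normalized KL loss is at most the raw loss: if `X` is a random
probability vector, `y(Xᵢ) > 0` a.s. with `E[y(Xᵢ)] = E[Xᵢ]`, and
`zᵢ = y(Xᵢ)/∑ⱼ y(Xⱼ)`, then `E[D(X‖z)] ≤ ∑ᵢ E[Xᵢ log(Xᵢ/y(Xᵢ))]`. -/
theorem stmt_3 {Ω : Type*} [MeasurableSpace Ω] (μ : Measure Ω)
    [IsProbabilityMeasure μ]
    (K : ℕ) (X : Ω → Fin K → ℝ) (y : ℝ → ℝ)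
    (hsimplex : ∀ᵐ ω ∂μ, (∀ i, 0 ≤ X ω i) ∧ ∑ i, X ω i = 1)
    (hypos : ∀ᵐ ω ∂μ, ∀ i, 0 < y (X ω i))
    (hmean : ∀ i, ∫ ω, y (X ω i) ∂μ = ∫ ω, X ω i ∂μ)
    (hint1 : ∀ i, Integrable (fun ω => X ω i) μ)
    (hint2 : ∀ i, Integrable (fun ω => y (X ω i)) μ)
    (hint3 : ∀ i, Integrable (fun ω => X ω i * Real.log (X ω i / y (X ω i))) μ)
    (hint4 : Integrable (fun ω => Real.log (∑ j, y (X ω j))) μ) :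
    ∫ ω, (∑ i, X ω i * Real.log (X ω i / (y (X ω i) / ∑ j, y (X ω j)))) ∂μ
      ≤ ∑ i, ∫ ω, X ω i * Real.log (X ω i / y (X ω i)) ∂μ := by
  have hnormalize : ∀ᵐ ω ∂μ,
      ∑ i, X ω i * Real.log (X ω i / (y (X ω i) / ∑ j, y (X ω j)))
        = ∑ i, X ω i * Real.log (X ω i / y (X ω i)) + Real.log (∑ j, y (X ω j)) := by
    filter_upwards [hsimplex, hypos] with ω hX hy using sum_mul_log_div_div_sum hX.1 hX.2 hy
  have hmass : ∫ ω, ∑ j, y (X ω j) ∂μ = 1 := by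
    rw [integral_finsetSum _ fun i _ => hint2 i, Finset.sum_congr rfl fun i _ => hmean i,
      ← integral_finsetSum _ fun i _ => hint1 i,
      integral_congr_ae (hsimplex.mono fun ω hX => hX.2)]
    simp
  have hlog : ∫ ω, Real.log (∑ j, y (X ω j)) ∂μ ≤ 0 := by
    have hpos : ∀ᵐ ω ∂μ, 0 < ∑ j, y (X ω j) := by
      filter_upwards [hsimplex, hypos] with ω hX hy using sum_pos_of_sum_eq_one hX.2 hy
    linarith [integral_log_le_integral_sub_one hpos (integrable_finsetSum _ fun i _ => hint2 i)
      hint4]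
  rw [integral_congr_ae hnormalize, integral_add (integrable_finsetSum _ fun i _ => hint3 i) hint4,
    integral_finsetSum _ fun i _ => hint3 i]
  linarith
end

section
/- Let I = [ȳ − r/2, ȳ + r/2] ⊆ (0,1] be an interval with midpoint ȳ and width r, and let q be any probability distribution supported on I with mean m = E_{X∼q}[X]. Then E_{X∼q}[X log(X/m)] ≤ (1/2)·r²/ȳ. -/
open MeasureTheory ProbabilityTheory Real Set

/-! The pointwise bound `log y ≤ y - 1` gives `x log (x / m) ≤ x² / m - x`, so the left-hand side
is at most `Var X / m`: the relative entropy is dominated by the χ²-divergence. The Bhatia–Davis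
inequality bounds `Var X` by `(b - m)(m - a)` on `I = [a, b]`, and `(b - m)(m - a) / m` never
exceeds `(b - a)² / (a + b) = r² / (2ȳ)`. -/

theorem Real.mul_log_div_le {x m : ℝ} (hx : 0 ≤ x) (hm : 0 < m) :
    x * log (x / m) ≤ x ^ 2 / m - x := by
  rcases hx.eq_or_lt with rfl | hx
  · simp
  calc x * log (x / m) ≤ x * (x / m - 1) :=
        mul_le_mul_of_nonneg_left (log_le_sub_one_of_pos (div_pos hx hm)) hx.le
    _ = x ^ 2 / m - x := by ring

theorem sub_mul_sub_div_le_sq_div_add {a b m : ℝ} (ha : 0 < a) (hb : 0 ≤ b) (hm : 0 < m) :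
    (b - m) * (m - a) / m ≤ (b - a) ^ 2 / (a + b) := by
  rw [div_le_div_iff₀ hm (by linarith)]
  -- `(b - a)² m - (a + b)(b - m)(m - a) = a (m - b)² + b (m - a)²`
  nlinarith [mul_nonneg ha.le (sq_nonneg (m - b)), mul_nonneg hb (sq_nonneg (m - a))]

theorem MeasureTheory.Integrable.of_continuousOn_of_ae_mem {α E : Type*} [TopologicalSpace α]
    [MeasurableSpace α] [NormedAddCommGroup E] {μ : Measure α} [IsFiniteMeasure μ] {K : Set α}
    {f : α → E} (hK : IsCompact K) (hf : ContinuousOn f K) (hfm : AEStronglyMeasurable f μ)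
    (hsupp : ∀ᵐ x ∂μ, x ∈ K) : Integrable f μ := by
  obtain ⟨C, hC⟩ := hK.exists_bound_of_continuousOn hf
  exact Integrable.of_bound hfm C (hsupp.mono hC)

theorem integral_mul_log_div_mean_le_variance_div {μ : Measure ℝ} [IsProbabilityMeasure μ]
    {a b : ℝ} (ha : 0 < a) (hsupp : ∀ᵐ x ∂μ, x ∈ Icc a b) :
    ∫ x, x * log (x / ∫ t, t ∂μ) ∂μ ≤ Var[id; μ] / ∫ t, t ∂μ := by
  set m := ∫ t, t ∂μ
  have hX : MemLp id 2 μ := memLp_of_bounded hsupp aestronglyMeasurable_id 2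
  have hsq : Integrable (fun x : ℝ ↦ x ^ 2) μ := hX.integrable_sq
  have hid : Integrable (fun x : ℝ ↦ x) μ := hX.integrable one_le_two
  have hm : 0 < m := ha.trans_le (Convex.integral_mem (convex_Icc a b) isClosed_Icc hsupp hid).1
  have hf : Integrable (fun x ↦ x * log (x / m)) μ := by
    refine .of_continuousOn_of_ae_mem isCompact_Icc ?_ (by fun_prop) hsupp
    exact continuousOn_id.mul <| (continuousOn_id.div_const m).log
      fun x hx ↦ (div_pos (ha.trans_le hx.1) hm).ne'
  calc ∫ x, x * log (x / m) ∂μ ≤ ∫ x, (x ^ 2 / m - x) ∂μ :=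
        integral_mono_ae hf ((hsq.div_const m).sub hid) <| hsupp.mono fun x hx ↦
          Real.mul_log_div_le (ha.le.trans hx.1) hm
    _ = Var[id; μ] / m := by
        rw [integral_sub (hsq.div_const m) hid, integral_div, variance_eq_sub hX]
        field_simp
        simp [m, sq]

theorem integral_mul_log_div_mean_le {μ : Measure ℝ} [IsProbabilityMeasure μ] {a b : ℝ}
    (ha : 0 < a) (hsupp : ∀ᵐ x ∂μ, x ∈ Icc a b) :
    ∫ x, x * log (x / ∫ t, t ∂μ) ∂μ ≤ (b - a) ^ 2 / (a + b) := by
  have hm := Convex.integral_mem (convex_Icc a b) isClosed_Icc hsupp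
    ((memLp_of_bounded hsupp aestronglyMeasurable_id 2).integrable one_le_two)
  calc _ ≤ Var[id; μ] / ∫ t, t ∂μ := integral_mul_log_div_mean_le_variance_div ha hsupp
    _ ≤ (b - ∫ t, t ∂μ) * ((∫ t, t ∂μ) - a) / ∫ t, t ∂μ := by
        gcongr
        · exact ha.le.trans hm.1
        · exact variance_le_sub_mul_sub hsupp aemeasurable_id
    _ ≤ (b - a) ^ 2 / (a + b) :=
        sub_mul_sub_div_le_sq_div_add ha (ha.le.trans (hm.1.trans hm.2)) (ha.trans_le hm.1)

theorem stmt_5_general (ybar r : ℝ)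
    (hI : Set.Icc (ybar - r / 2) (ybar + r / 2) ⊆ Set.Ioc (0 : ℝ) 1)
    (μ : Measure ℝ) [IsProbabilityMeasure μ]
    (hsupp : ∀ᵐ x ∂μ, x ∈ Set.Icc (ybar - r / 2) (ybar + r / 2)) :
    ∫ x, x * Real.log (x / (∫ t, t ∂μ)) ∂μ ≤ (1 / 2) * r ^ 2 / ybar := by
  obtain ⟨x, hx⟩ := hsupp.exists
  have ha : 0 < ybar - r / 2 := (hI ⟨le_rfl, hx.1.trans hx.2⟩).1
  calc _ ≤ (ybar + r / 2 - (ybar - r / 2)) ^ 2 / (ybar - r / 2 + (ybar + r / 2)) :=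
        integral_mul_log_div_mean_le ha hsupp
    _ = 1 / 2 * r ^ 2 / ybar := by ring

/-- Single-interval loss upper bound: if `q` is supported on
`I = [ȳ − r/2, ȳ + r/2] ⊆ (0,1]` with mean `m`, then
`E[X log(X/m)] ≤ (1/2)·r²/ȳ`. -/
theorem stmt_5 (ybar r : ℝ) (hr : 0 ≤ r)
    (hI : Set.Icc (ybar - r / 2) (ybar + r / 2) ⊆ Set.Ioc (0 : ℝ) 1)
    (μ : Measure ℝ) [IsProbabilityMeasure μ]
    (hsupp : ∀ᵐ x ∂μ, x ∈ Set.Icc (ybar - r / 2) (ybar + r / 2)) :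
    ∫ x, x * Real.log (x / (∫ t, t ∂μ)) ∂μ ≤ (1 / 2) * r ^ 2 / ybar :=
  stmt_5_general ybar r hI μ hsupp
end

section
/- Let p be a probability density on [0,1] with E_{X∼p}[X] = 1/K. Then there exists a joint distribution of random variables (X_1, …, X_K) such that each X_i has marginal distribution p and ∑_{i=1}^K X_i ≤ 2 almost surely. -/
/-!
Let `Q` be the quantile function of `μ` and `V` uniform on `(0, 1/K)`. The `K` points
`V + j/K` are spread evenly over `(0, 1)`; reading `Q` at them in a uniformly random cyclic order
gives `K` variables, each distributed as `Q(U)` with `U` uniform on `(0, 1)`, i.e. as `μ`.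
Since `Q` is monotone, the first `K - 1` values form a lower Riemann sum:
`(1/K) ∑_{j < K-1} Q(V + j/K) ≤ ∫₀¹ Q = E[X] = 1/K`, and the last value is at most `1`.
-/

open MeasureTheory Set Filter Topology ProbabilityTheory

theorem MeasureTheory.Measure.sum_range_restrict_Ioc {α : Type*} [MeasurableSpace α]
    [TopologicalSpace α] [LinearOrder α] [OrderClosedTopology α] [OpensMeasurableSpace α]
    (μ : Measure α) {a : ℕ → α} (ha : Monotone a) (n : ℕ) :
    ∑ k ∈ Finset.range n, μ.restrict (Ioc (a k) (a (k + 1))) = μ.restrict (Ioc (a 0) (a n)) := by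
  induction n with
  | zero => simp
  | succ n ih =>
    rw [Finset.sum_range_succ, ih, ← Measure.restrict_union (Ioc_disjoint_Ioc_of_le le_rfl)
      measurableSet_Ioc, Ioc_union_Ioc_eq_Ioc (ha n.zero_le) (ha n.le_succ)]

theorem Real.map_restrict_Ioo_add_const (a b c : ℝ) :
    (volume.restrict (Ioo a b)).map (· + c) = volume.restrict (Ioo (a + c) (b + c)) := by
  have := (measurePreserving_add_right volume c).restrict_preimage
    (measurableSet_Ioo (a := a + c) (b := b + c))
  rw [preimage_add_const_Ioo, add_sub_cancel_right, add_sub_cancel_right] at this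
  exact this.map_eq

theorem Real.sum_restrict_Ioo_div (K : ℕ) [NeZero K] :
    Measure.sum (fun t : Fin K => volume.restrict (Ioo ((t : ℕ) / K : ℝ) (((t : ℕ) + 1) / K))) =
      volume.restrict (Ioo 0 1) := by
  have hK : (K : ℝ) ≠ 0 := NeZero.ne _
  have hmono : Monotone fun k : ℕ => (k / K : ℝ) := fun k l hkl =>
    div_le_div_of_nonneg_right (Nat.cast_le.2 hkl) (Nat.cast_nonneg K)
  have := Measure.sum_range_restrict_Ioc volume hmono K
  simp only [Nat.cast_zero, zero_div, div_self hK, Nat.cast_succ] at this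
  simp_rw [Measure.sum_fintype, Measure.restrict_congr_set Ioo_ae_eq_Ioc]
  rw [Fin.sum_univ_eq_sum_range (fun k => volume.restrict (Ioc ((k : ℝ) / K) ((k + 1) / K))), this]

theorem add_div_mem_Ioo {K : ℕ} [NeZero K] {v : ℝ} (hv : v ∈ Ioo 0 (K : ℝ)⁻¹) {j : ℕ}
    (hj : j < K) : v + j / K ∈ Ioo 0 1 := by
  have hK : (0 : ℝ) < K := by exact_mod_cast Nat.pos_of_neZero K
  have hjK : (j : ℝ) + 1 ≤ K := by exact_mod_cast hj
  constructor
  · have := hv.1; positivity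
  · calc v + j / K < (K : ℝ)⁻¹ + j / K := by linarith [hv.2]
      _ = (j + 1) / K := by ring
      _ ≤ 1 := (div_le_one hK).2 hjK

theorem MonotoneOn.sum_le_mul_setIntegral_Ioo {f : ℝ → ℝ} (hf : MonotoneOn f (Ioo 0 1))
    (hf0 : ∀ u ∈ Ioo (0 : ℝ) 1, 0 ≤ f u) (hfi : IntegrableOn f (Ioo 0 1)) (n : ℕ) {v : ℝ}
    (hv : v ∈ Ioo 0 ((n : ℝ) + 1)⁻¹) :
    ∑ j ∈ Finset.range n, f (v + j / (n + 1)) ≤ (n + 1) * ∫ u in Ioo 0 1, f u := by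
  set K : ℝ := n + 1
  have hK : 0 < K := by positivity
  have hvK : v * K < 1 := by
    simpa [inv_mul_cancel₀ hK.ne'] using mul_lt_mul_of_pos_right hv.2 hK
  have hmaps : MapsTo (· / K) (Icc (v * K) (v * K + n)) (Ioo 0 1) := fun x hx => by
    rw [mem_Ioo, lt_div_iff₀ hK, div_lt_iff₀ hK]
    constructor <;> nlinarith [hx.1, hx.2, hv.1]
  calc ∑ j ∈ Finset.range n, f (v + j / K)
      = ∑ j ∈ Finset.range n, f ((v * K + j) / K) :=
        Finset.sum_congr rfl fun j _ => by rw [add_div, mul_div_cancel_right₀ _ hK.ne']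
    _ ≤ ∫ x in v * K..v * K + n, f (x / K) :=
        (hf.comp (fun x _ y _ hxy => by gcongr) hmaps).sum_le_integral
    _ = K * ∫ u in v..v + n / K, f u := by
        rw [intervalIntegral.integral_comp_div f hK.ne', smul_eq_mul, add_div,
          mul_div_cancel_right₀ _ hK.ne']
    _ ≤ K * ∫ u in Ioo 0 1, f u := by
        rw [intervalIntegral.integral_of_le (le_add_of_nonneg_right (by positivity))]
        refine mul_le_mul_of_nonneg_left (setIntegral_mono_set hfi ?_ ?_) hK.le
        · exact ae_restrict_of_forall_mem measurableSet_Ioo hf0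
        · refine (Ioc_subset_Ioo hv.1.le ?_).eventuallyLE
          rw [← mul_lt_mul_iff_left₀ hK, add_mul, div_mul_cancel₀ _ hK.ne']
          linarith

namespace ProbabilityTheory

section Quantile

/-- The paper's `F⁻¹(u) = inf {x | F(x) ≥ u}`. Only its values on `(0, 1)` are meaningful:
elsewhere the set is empty or unbounded below and `sInf` returns the junk value `0`. -/
noncomputable def quantile (μ : Measure ℝ) (u : ℝ) : ℝ := sInf {x | u ≤ cdf μ x}

variable {μ : Measure ℝ} {u : ℝ}

theorem nonempty_setOf_le_cdf (hu : u < 1) : {x | u ≤ cdf μ x}.Nonempty :=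
  ((tendsto_cdf_atTop μ).eventually (eventually_ge_nhds hu)).exists

theorem bddBelow_setOf_le_cdf (hu : 0 < u) : BddBelow {x | u ≤ cdf μ x} := by
  obtain ⟨y, hy⟩ := ((tendsto_cdf_atBot μ).eventually (eventually_lt_nhds hu)).exists
  refine ⟨y, fun x (hx : u ≤ cdf μ x) => ?_⟩
  by_contra! hxy
  linarith [monotone_cdf μ hxy.le]

theorem le_cdf_quantile (hu : u ∈ Ioo 0 1) : u ≤ cdf μ (quantile μ u) := by
  have hcont : Tendsto (cdf μ) (𝓝[>] (quantile μ u)) (𝓝 (cdf μ (quantile μ u))) :=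
    ((cdf μ).right_continuous _).tendsto.mono_left (nhdsWithin_mono _ Ioi_subset_Ici_self)
  refine ge_of_tendsto hcont ?_
  filter_upwards [self_mem_nhdsWithin] with t ht
  obtain ⟨x, hx, hxt⟩ := exists_lt_of_csInf_lt (nonempty_setOf_le_cdf hu.2) ht
  exact hx.trans (monotone_cdf μ hxt.le)

theorem quantile_le_iff (hu : u ∈ Ioo 0 1) {x : ℝ} : quantile μ u ≤ x ↔ u ≤ cdf μ x :=
  ⟨fun h => (le_cdf_quantile hu).trans (monotone_cdf μ h),
    fun h => csInf_le (bddBelow_setOf_le_cdf hu.1) h⟩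

theorem monotoneOn_quantile : MonotoneOn (quantile μ) (Ioo 0 1) := fun _ hu _ hv huv =>
  (quantile_le_iff hu).2 (huv.trans (le_cdf_quantile hv))

theorem aemeasurable_quantile : AEMeasurable (quantile μ) (volume.restrict (Ioo 0 1)) :=
  aemeasurable_restrict_of_monotoneOn measurableSet_Ioo monotoneOn_quantile

variable [IsProbabilityMeasure μ]

variable (μ) in
theorem map_quantile : (volume.restrict (Ioo 0 1)).map (quantile μ) = μ := by
  refine Measure.ext_of_Iic _ _ fun x => ?_
  rw [Measure.map_apply_of_aemeasurable aemeasurable_quantile measurableSet_Iic,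
    Measure.restrict_apply' measurableSet_Ioo, ← ofReal_cdf]
  have : quantile μ ⁻¹' Iic x ∩ Ioo 0 1 = Ioc 0 (cdf μ x) \ {1} := by
    ext u
    simp only [mem_inter_iff, mem_preimage, mem_Iic, Set.mem_sdiff, mem_Ioc, mem_singleton_iff]
    constructor
    · rintro ⟨h, hu⟩
      exact ⟨⟨hu.1, (quantile_le_iff hu).1 h⟩, hu.2.ne⟩
    · rintro ⟨⟨h0, h⟩, h1⟩
      have hu : u ∈ Ioo 0 1 := ⟨h0, (h.trans (cdf_le_one μ x)).lt_of_ne h1⟩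
      exact ⟨(quantile_le_iff hu).2 h, hu⟩
  rw [this, measure_sdiff_null (measure_singleton 1), Real.volume_Ioc, sub_zero]

variable (μ) in
theorem setIntegral_quantile : ∫ u in Ioo 0 1, quantile μ u = ∫ x, x ∂μ := by
  conv_rhs => rw [← map_quantile μ]
  exact (integral_map aemeasurable_quantile aestronglyMeasurable_id).symm

theorem quantile_mem_Icc (hμ : ∀ᵐ x ∂μ, x ∈ Icc (0 : ℝ) 1) (hu : u ∈ Ioo 0 1) :
    quantile μ u ∈ Icc 0 1 := by
  constructor
  · by_contra! hneg
    have hnull : μ (Iic (quantile μ u)) = 0 := by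
      refine measure_mono_null ?_ (ae_iff.1 hμ)
      exact fun x (hx : x ≤ _) hx' => hx'.1.not_gt (hx.trans_lt hneg)
    rw [← ofReal_cdf, ENNReal.ofReal_eq_zero] at hnull
    linarith [le_cdf_quantile (μ := μ) hu, hu.1]
  · have hnull : μ (Iic 1)ᶜ = 0 := by
      refine measure_mono_null ?_ (ae_iff.1 hμ)
      exact fun x (hx : ¬x ≤ 1) hx' => hx hx'.2
    rw [prob_compl_eq_zero_iff measurableSet_Iic, ← ofReal_cdf, ENNReal.ofReal_eq_one] at hnull
    exact (quantile_le_iff hu).2 (by rw [hnull]; exact hu.2.le)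

theorem integrableOn_quantile (hμ : ∀ᵐ x ∂μ, x ∈ Icc (0 : ℝ) 1) :
    IntegrableOn (quantile μ) (Ioo 0 1) :=
  Integrable.of_bound aemeasurable_quantile.aestronglyMeasurable 1 <|
    ae_restrict_of_forall_mem measurableSet_Ioo fun u hu => by
      have := quantile_mem_Icc hμ hu
      rw [Real.norm_eq_abs, abs_le]
      constructor <;> linarith [this.1, this.2]

end Quantile

section Coupling

variable (μ : Measure ℝ) (K : ℕ) [NeZero K]

/-- The law of `(Q(V + ((i + s) mod K)/K))ᵢ` with `V` uniform on `(0, 1/K)` and `s` uniform on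
`Fin K`, as a sum of `K` measures of mass `1/K`. The paper shuffles the sub-intervals by a uniformly
random permutation; a uniformly random cyclic shift already makes every marginal uniform. -/
noncomputable def cyclicQuantileCoupling : Measure (Fin K → ℝ) :=
  Measure.sum fun s : Fin K => (volume.restrict (Ioo 0 (K : ℝ)⁻¹)).map
    fun v i => quantile μ (v + ((i + s : Fin K) : ℕ) / K)

variable {K}

theorem aemeasurable_quantile_add_div {j : ℕ} (hj : j < K) :
    AEMeasurable (fun v => quantile μ (v + j / K)) (volume.restrict (Ioo 0 (K : ℝ)⁻¹)) :=
  aemeasurable_restrict_of_monotoneOn measurableSet_Ioo <|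
    monotoneOn_quantile.comp (fun _ _ _ _ h => by simpa using h)
      fun _ hv => add_div_mem_Ioo hv hj

theorem aemeasurable_cyclicQuantileCoupling_summand (s : Fin K) :
    AEMeasurable (fun v i => quantile μ (v + ((i + s : Fin K) : ℕ) / K))
      (volume.restrict (Ioo 0 (K : ℝ)⁻¹)) :=
  aemeasurable_pi_lambda _ fun _ => aemeasurable_quantile_add_div μ (Fin.is_lt _)

instance : IsProbabilityMeasure (cyclicQuantileCoupling μ K) := by
  constructor
  have hK : (K : ENNReal) ≠ 0 := by simp [NeZero.ne K]
  simp_rw [cyclicQuantileCoupling, Measure.sum_apply _ MeasurableSet.univ,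
    Measure.map_apply_of_aemeasurable (aemeasurable_cyclicQuantileCoupling_summand μ _)
      MeasurableSet.univ, preimage_univ, Measure.restrict_apply_univ, Real.volume_Ioo, sub_zero,
    tsum_fintype, Finset.sum_const, Finset.card_univ, Fintype.card_fin, nsmul_eq_mul,
    ENNReal.ofReal_inv_of_pos (Nat.cast_pos.2 (Nat.pos_of_neZero K)), ENNReal.ofReal_natCast]
  exact ENNReal.mul_inv_cancel hK (ENNReal.natCast_ne_top K)

theorem map_eval_cyclicQuantileCoupling [IsProbabilityMeasure μ] (i : Fin K) :
    (cyclicQuantileCoupling μ K).map (fun x => x i) = μ := by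
  calc _ = Measure.sum fun s : Fin K => (volume.restrict (Ioo 0 (K : ℝ)⁻¹)).map
        fun v => quantile μ (v + ((i + s : Fin K) : ℕ) / K) := by
        rw [cyclicQuantileCoupling, Measure.map_sum (measurable_pi_apply i).aemeasurable]
        congr 1
        funext s
        exact (measurable_pi_apply i).aemeasurable.map_map_of_aemeasurable
          (aemeasurable_cyclicQuantileCoupling_summand μ s)
    _ = Measure.sum fun t : Fin K => (volume.restrict (Ioo 0 (K : ℝ)⁻¹)).map
        fun v => quantile μ (v + (t : ℕ) / K) := by
        conv_rhs => rw [← Measure.sum_comp_equiv (Equiv.addLeft i)]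
        rfl
    _ = Measure.sum fun t : Fin K =>
        (volume.restrict (Ioo ((t : ℕ) / K : ℝ) (((t : ℕ) + 1) / K))).map (quantile μ) := by
        congr 1
        funext t
        have hshift : (volume.restrict (Ioo 0 (K : ℝ)⁻¹)).map (· + ((t : ℕ) : ℝ) / K) =
            volume.restrict (Ioo ((t : ℕ) / K : ℝ) (((t : ℕ) + 1) / K)) := by
          rw [Real.map_restrict_Ioo_add_const, zero_add]
          congr 2
          ring
        have hsub : Ioo ((t : ℕ) / K : ℝ) (((t : ℕ) + 1) / K) ⊆ Ioo 0 1 :=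
          Ioo_subset_Ioo (by positivity)
            ((div_le_one (Nat.cast_pos.2 (Nat.pos_of_neZero K))).2 (by norm_cast; exact t.isLt))
        rw [← hshift, AEMeasurable.map_map_of_aemeasurable ?_ (measurable_add_const _).aemeasurable]
        · rfl
        · rw [hshift]
          exact aemeasurable_quantile.mono_measure (Measure.restrict_mono hsub le_rfl)
    _ = (volume.restrict (Ioo 0 1)).map (quantile μ) := by
        rw [← Measure.map_sum (by rw [Real.sum_restrict_Ioo_div]; exact aemeasurable_quantile),
          Real.sum_restrict_Ioo_div]
    _ = μ := map_quantile μ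

theorem sum_quantile_add_div_le_two [IsProbabilityMeasure μ] (hμ : ∀ᵐ x ∂μ, x ∈ Icc (0 : ℝ) 1)
    (hmean : ∫ x, x ∂μ = 1 / K) {v : ℝ} (hv : v ∈ Ioo 0 (K : ℝ)⁻¹) :
    ∑ j ∈ Finset.range K, quantile μ (v + j / K) ≤ 2 := by
  obtain ⟨n, rfl⟩ := Nat.exists_eq_add_one_of_ne_zero (NeZero.ne K)
  have hlast := (quantile_mem_Icc hμ (add_div_mem_Ioo hv n.lt_succ_self)).2
  push_cast at hv hmean hlast ⊢
  have hsum := monotoneOn_quantile.sum_le_mul_setIntegral_Ioo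
    (fun u hu => (quantile_mem_Icc hμ hu).1) (integrableOn_quantile hμ) n hv
  rw [setIntegral_quantile, hmean, mul_one_div_cancel (by positivity)] at hsum
  rw [Finset.sum_range_succ]
  linarith

theorem ae_sum_le_two_cyclicQuantileCoupling [IsProbabilityMeasure μ]
    (hμ : ∀ᵐ x ∂μ, x ∈ Icc (0 : ℝ) 1) (hmean : ∫ x, x ∂μ = 1 / K) :
    ∀ᵐ x ∂cyclicQuantileCoupling μ K, ∑ i, x i ≤ 2 := by
  rw [cyclicQuantileCoupling, Measure.ae_sum_iff]
  intro s
  rw [ae_map_iff (aemeasurable_cyclicQuantileCoupling_summand μ s)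
    (measurableSet_le (by fun_prop) measurable_const)]
  refine ae_restrict_of_forall_mem measurableSet_Ioo fun v hv => ?_
  calc ∑ i : Fin K, quantile μ (v + ((i + s : Fin K) : ℕ) / K)
      = ∑ j : Fin K, quantile μ (v + (j : ℕ) / K) :=
        Equiv.sum_comp (Equiv.addRight s) fun j : Fin K => quantile μ (v + (j : ℕ) / K)
    _ = ∑ j ∈ Finset.range K, quantile μ (v + j / K) :=
        Fin.sum_univ_eq_sum_range (fun j => quantile μ (v + j / K)) K
    _ ≤ 2 := sum_quantile_add_div_le_two μ hμ hmean hv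

end Coupling

end ProbabilityTheory

open ProbabilityTheory

/-- If `μ` is a probability distribution on `[0,1]` with mean `1/K`, then there
is a joint distribution of `(X₁,…,X_K)` with all marginals equal to `μ` and
`∑ᵢ Xᵢ ≤ 2` almost surely. -/
theorem stmt_8 (K : ℕ) (hK : 1 ≤ K) (μ : Measure ℝ) [IsProbabilityMeasure μ]
    (hsupp : ∀ᵐ x ∂μ, x ∈ Set.Icc (0 : ℝ) 1)
    (hmean : ∫ x, x ∂μ = 1 / K) :
    ∃ ν : Measure (Fin K → ℝ), IsProbabilityMeasure ν ∧
      (∀ i, ν.map (fun x => x i) = μ) ∧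
      (∀ᵐ x ∂ν, ∑ i, x i ≤ 2) := by
  have : NeZero K := ⟨by omega⟩
  exact ⟨cyclicQuantileCoupling μ K, inferInstance, map_eval_cyclicQuantileCoupling μ,
    ae_sum_le_two_cyclicQuantileCoupling μ hsupp hmean⟩
end

section
/- Let p be a probability density on [0,1] and f : [0,1] → [0,1] a monotonically increasing absolutely continuous function with ∫₀¹ f'(x) dx = 1 and f'(x) > 0 a.e. Then (1/24)·∫₀¹ p(x)·f'(x)^{-2}·x^{-1} dx ≥ (1/24)·(∫₀¹ (p(x)/x)^{1/3} dx)³, with equality when f'(x) is proportional to (p(x)/x)^{1/3}. -/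
/-!
Hölder's inequality with exponents `3` and `3/2`, applied to the factorisation
`(p/x)^{1/3} = (p f'^{-2} x^{-1})^{1/3} · f'^{2/3}`, gives
`∫ (p/x)^{1/3} ≤ (∫ p f'^{-2} x^{-1})^{1/3} (∫ f')^{2/3}`; cubing and using `∫ f' = 1` yields the
bound. For `f' = c⁻¹ (p/x)^{1/3}` with `c = ∫ (p/x)^{1/3}` the integrand of the loss is
`c² (p/x)^{1/3}` pointwise, so the loss equals `c³`.
-/

open MeasureTheory

lemma rpow_one_third_mul_rpow_two_thirds {a w : ℝ} (ha : 0 ≤ a) (hw : 0 < w) :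
    (a * w ^ (-2 : ℝ)) ^ ((1 : ℝ) / 3) * w ^ ((2 : ℝ) / 3) = a ^ ((1 : ℝ) / 3) := by
  rw [Real.mul_rpow ha (Real.rpow_nonneg hw.le _), ← Real.rpow_mul hw.le, mul_assoc,
    ← Real.rpow_add hw]
  norm_num

lemma rpow_one_third_mul_rpow_two_thirds_pow_three {X Y : ℝ} (hX : 0 ≤ X) (hY : 0 ≤ Y) :
    (X ^ ((1 : ℝ) / 3) * Y ^ ((1 : ℝ) / (3 / 2))) ^ 3 = X * Y ^ 2 := by
  rw [mul_pow, ← Real.rpow_natCast, ← Real.rpow_natCast (Y ^ _), ← Real.rpow_mul hX,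
    ← Real.rpow_mul hY]
  norm_num

lemma mul_inv_mul_rpow_one_third_rpow_neg_two {a c : ℝ} (ha : 0 ≤ a)
    (hpos : 0 < c⁻¹ * a ^ ((1 : ℝ) / 3)) :
    a * (c⁻¹ * a ^ ((1 : ℝ) / 3)) ^ (-2 : ℝ) = c ^ 2 * a ^ ((1 : ℝ) / 3) := by
  have hq : 0 < a ^ ((1 : ℝ) / 3) := (Real.rpow_nonneg ha _).lt_of_ne fun h => by
    rw [← h, mul_zero] at hpos
    exact hpos.false
  have hq3 : a = (a ^ ((1 : ℝ) / 3)) ^ 3 := by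
    rw [← Real.rpow_natCast, ← Real.rpow_mul ha]
    norm_num
  set q := a ^ ((1 : ℝ) / 3)
  rw [Real.rpow_neg hpos.le, Real.rpow_two, hq3]
  field_simp

section

variable {α : Type*} [MeasurableSpace α] {μ : Measure α}

lemma memLp_ofReal_of_integrable_rpow {F : α → ℝ} {r : ℝ} (hr : 0 < r)
    (hF : AEStronglyMeasurable F μ) (hF_nonneg : 0 ≤ᵐ[μ] F)
    (hint : Integrable (fun x => F x ^ r) μ) : MemLp F (ENNReal.ofReal r) μ := by
  rw [← integrable_norm_rpow_iff hF (by simpa using hr) ENNReal.ofReal_ne_top,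
    ENNReal.toReal_ofReal hr.le]
  refine hint.congr ?_
  filter_upwards [hF_nonneg] with x hx
  rw [Real.norm_of_nonneg hx]

theorem integral_rpow_one_third_pow_three_le {a w : α → ℝ} (ha : 0 ≤ᵐ[μ] a)
    (hw : ∀ᵐ x ∂μ, 0 < w x) (hw_int : Integrable w μ)
    (hL_int : Integrable (fun x => a x * w x ^ (-2 : ℝ)) μ) :
    (∫ x, a x ^ ((1 : ℝ) / 3) ∂μ) ^ 3
      ≤ (∫ x, a x * w x ^ (-2 : ℝ) ∂μ) * (∫ x, w x ∂μ) ^ 2 := by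
  set L : α → ℝ := fun x => a x * w x ^ (-2 : ℝ)
  have hL : 0 ≤ᵐ[μ] L := by
    filter_upwards [ha, hw] with x hax hwx
    exact mul_nonneg hax (Real.rpow_nonneg hwx.le _)
  have hF3 : ∀ᵐ x ∂μ, (L x ^ ((1 : ℝ) / 3)) ^ (3 : ℝ) = L x := by
    filter_upwards [hL] with x hx
    rw [← Real.rpow_mul hx]
    norm_num
  have hG32 : ∀ᵐ x ∂μ, (w x ^ ((2 : ℝ) / 3)) ^ ((3 : ℝ) / 2) = w x := by
    filter_upwards [hw] with x hx
    rw [← Real.rpow_mul hx.le]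
    norm_num
  have hFG : ∀ᵐ x ∂μ, L x ^ ((1 : ℝ) / 3) * w x ^ ((2 : ℝ) / 3) = a x ^ ((1 : ℝ) / 3) := by
    filter_upwards [ha, hw] with x hax hwx
    exact rpow_one_third_mul_rpow_two_thirds hax hwx
  have hF_mem : MemLp (fun x => L x ^ ((1 : ℝ) / 3)) (ENNReal.ofReal 3) μ :=
    memLp_ofReal_of_integrable_rpow (by norm_num)
      (hL_int.aemeasurable.pow_const _).aestronglyMeasurable
      (by filter_upwards [hL] with x hx using Real.rpow_nonneg hx _)
      (hL_int.congr (by filter_upwards [hF3] with x hx using hx.symm))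
  have hG_mem : MemLp (fun x => w x ^ ((2 : ℝ) / 3)) (ENNReal.ofReal (3 / 2)) μ :=
    memLp_ofReal_of_integrable_rpow (by norm_num)
      (hw_int.aemeasurable.pow_const _).aestronglyMeasurable
      (by filter_upwards [hw] with x hx using Real.rpow_nonneg hx.le _)
      (hw_int.congr (by filter_upwards [hG32] with x hx using hx.symm))
  have holder := integral_mul_le_Lp_mul_Lq_of_nonneg
    (Real.holderConjugate_iff.mpr ⟨by norm_num, by norm_num⟩)
    (by filter_upwards [hL] with x hx using Real.rpow_nonneg hx _)
    (by filter_upwards [hw] with x hx using Real.rpow_nonneg hx.le _) hF_mem hG_mem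
  rw [integral_congr_ae hFG, integral_congr_ae hF3, integral_congr_ae hG32] at holder
  calc (∫ x, a x ^ ((1 : ℝ) / 3) ∂μ) ^ 3
      ≤ ((∫ x, L x ∂μ) ^ ((1 : ℝ) / 3) * (∫ x, w x ∂μ) ^ ((1 : ℝ) / (3 / 2))) ^ 3 :=
        pow_le_pow_left₀ (integral_nonneg_of_ae
          (by filter_upwards [ha] with x hx using Real.rpow_nonneg hx _)) holder 3
    _ = (∫ x, L x ∂μ) * (∫ x, w x ∂μ) ^ 2 :=
        rpow_one_third_mul_rpow_two_thirds_pow_three (integral_nonneg_of_ae hL)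
          (integral_nonneg_of_ae (by filter_upwards [hw] with x hx using hx.le))

theorem integral_mul_rpow_neg_two_of_ae_eq {a w : α → ℝ} {c : ℝ} (ha : 0 ≤ᵐ[μ] a)
    (hw : ∀ᵐ x ∂μ, 0 < w x) (hwa : ∀ᵐ x ∂μ, w x = c⁻¹ * a x ^ ((1 : ℝ) / 3)) :
    ∫ x, a x * w x ^ (-2 : ℝ) ∂μ = c ^ 2 * ∫ x, a x ^ ((1 : ℝ) / 3) ∂μ := by
  rw [← integral_const_mul]
  refine integral_congr_ae ?_
  filter_upwards [ha, hw, hwa] with x hax hwx hwax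
  rw [hwax] at hwx ⊢
  exact mul_inv_mul_rpow_one_third_rpow_neg_two hax hwx

end

theorem stmt_12_general (p f' : ℝ → ℝ)
    (hp : ∀ x ∈ Set.Icc (0 : ℝ) 1, 0 ≤ p x)
    (hf'pos : ∀ᵐ x ∂(volume.restrict (Set.Icc (0 : ℝ) 1)), 0 < f' x)
    (hf'int : (∫ x in Set.Icc (0 : ℝ) 1, f' x) = 1)
    (hLint : IntegrableOn (fun x => p x * f' x ^ (-2 : ℝ) * x⁻¹) (Set.Icc 0 1)) :
    (1 / 24) * (∫ x in Set.Icc (0 : ℝ) 1, (p x / x) ^ ((1 : ℝ) / 3)) ^ 3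
      ≤ (1 / 24) * ∫ x in Set.Icc (0 : ℝ) 1, p x * f' x ^ (-2 : ℝ) * x⁻¹
    ∧ ((∀ᵐ x ∂(volume.restrict (Set.Icc (0 : ℝ) 1)),
          f' x = (∫ t in Set.Icc (0 : ℝ) 1, (p t / t) ^ ((1 : ℝ) / 3))⁻¹
            * (p x / x) ^ ((1 : ℝ) / 3)) →
        (1 / 24) * ∫ x in Set.Icc (0 : ℝ) 1, p x * f' x ^ (-2 : ℝ) * x⁻¹
          = (1 / 24) * (∫ x in Set.Icc (0 : ℝ) 1, (p x / x) ^ ((1 : ℝ) / 3)) ^ 3) := by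
  have hloss : (fun x => p x * f' x ^ (-2 : ℝ) * x⁻¹) = fun x => p x / x * f' x ^ (-2 : ℝ) := by
    funext x
    ring
  have ha : 0 ≤ᵐ[volume.restrict (Set.Icc (0 : ℝ) 1)] fun x => p x / x :=
    (ae_restrict_iff' measurableSet_Icc).mpr <| .of_forall fun x hx => div_nonneg (hp x hx) hx.1
  rw [hloss] at hLint ⊢
  refine ⟨?_, fun hf'eq => ?_⟩
  · have hbound := integral_rpow_one_third_pow_three_le ha hf'pos
      (Integrable.of_integral_ne_zero (by simp [hf'int])) hLint
    rw [hf'int, one_pow, mul_one] at hbound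
    gcongr
  · rw [integral_mul_rpow_neg_two_of_ae_eq ha hf'pos hf'eq]
    ring

/-- Calculus-of-variations lower bound for the asymptotic compander loss:
for a density `p` on `[0,1]` and a monotone absolutely continuous compander
`f` with a.e. derivative `f' > 0` and `∫₀¹ f' = 1`,
`(1/24)·∫ p·f'⁻²·x⁻¹ ≥ (1/24)·(∫ (p/x)^{1/3})³`, with equality when
`f'` is proportional to `(p/x)^{1/3}`. -/
theorem stmt_12 (p f f' : ℝ → ℝ)
    (hp : ∀ x ∈ Set.Icc (0 : ℝ) 1, 0 ≤ p x)
    (hpint : (∫ x in Set.Icc (0 : ℝ) 1, p x) = 1)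
    (hmono : MonotoneOn f (Set.Icc 0 1))
    (hderiv : ∀ᵐ x ∂(volume.restrict (Set.Icc (0 : ℝ) 1)), HasDerivAt f (f' x) x)
    (hf'pos : ∀ᵐ x ∂(volume.restrict (Set.Icc (0 : ℝ) 1)), 0 < f' x)
    (hf'int : (∫ x in Set.Icc (0 : ℝ) 1, f' x) = 1)
    (hLint : IntegrableOn (fun x => p x * f' x ^ (-2 : ℝ) * x⁻¹) (Set.Icc 0 1)) :
    (1 / 24) * (∫ x in Set.Icc (0 : ℝ) 1, (p x / x) ^ ((1 : ℝ) / 3)) ^ 3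
      ≤ (1 / 24) * ∫ x in Set.Icc (0 : ℝ) 1, p x * f' x ^ (-2 : ℝ) * x⁻¹
    ∧ ((∀ᵐ x ∂(volume.restrict (Set.Icc (0 : ℝ) 1)),
          f' x = (∫ t in Set.Icc (0 : ℝ) 1, (p t / t) ^ ((1 : ℝ) / 3))⁻¹
            * (p x / x) ^ ((1 : ℝ) / 3)) →
        (1 / 24) * ∫ x in Set.Icc (0 : ℝ) 1, p x * f' x ^ (-2 : ℝ) * x⁻¹
          = (1 / 24) * (∫ x in Set.Icc (0 : ℝ) 1, (p x / x) ^ ((1 : ℝ) / 3)) ^ 3) :=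
  stmt_12_general p f' hp hf'pos hf'int hLint
end

section
/- Let a, b > 0 with a√(a+b) = 2 and let p(x) = (a x^{1/3} + b x^{4/3})^{-3/2} on [0,1]. Then ∫₀¹ x·p(x) dx = −a/b + (a/b)·√(a/b + 1)·ArcSinh(√(b/a)). -/
/-!
Where `x > 0` the integrand equals `√x (a + b x)^(-3/2)`. The substitution `x = (a/b) sinh² θ`
gives it the antiderivative `(2 / (b √b)) arsinh √(b x / a) - (2 / b) √x / √(a + b x)`, and
the normalisation `a √(a + b) = 2` turns `1 / √(a + b)` into `a / 2` and `√(a / b + 1)` into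
`2 / (a √b)`.
-/

open Real Set

lemma rpow_neg_three_halves {y : ℝ} (hy : 0 ≤ y) : y ^ (-(3 : ℝ) / 2) = (y * √y)⁻¹ := by
  rw [rpow_div_two_eq_sqrt _ hy, rpow_neg (sqrt_nonneg y), show (3 : ℝ) = (3 : ℕ) by norm_num,
    rpow_natCast, pow_succ', sq, ← mul_assoc, mul_self_sqrt hy]

lemma mul_rpow_third_add_rpow_four_thirds {a b x : ℝ} (hx : 0 ≤ x) (hy : 0 ≤ a + b * x) :
    x * (a * x ^ ((1 : ℝ) / 3) + b * x ^ ((4 : ℝ) / 3)) ^ (-(3 : ℝ) / 2)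
      = √x / ((a + b * x) * √(a + b * x)) := by
  rcases hx.eq_or_lt with rfl | hx
  · simp
  have hfactor :
      a * x ^ ((1 : ℝ) / 3) + b * x ^ ((4 : ℝ) / 3) = x ^ ((1 : ℝ) / 3) * (a + b * x) := by
    rw [show (4 : ℝ) / 3 = 1 / 3 + 1 by norm_num, rpow_add hx, rpow_one]
    ring
  have hx_pow : x * (x ^ ((1 : ℝ) / 3)) ^ (-(3 : ℝ) / 2) = √x := by
    rw [← rpow_mul hx.le, sqrt_eq_rpow]
    conv_lhs => arg 1; rw [← rpow_one x]
    rw [← rpow_add hx]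
    norm_num
  rw [hfactor, mul_rpow (by positivity) hy, ← mul_assoc, hx_pow, rpow_neg_three_halves hy,
    div_eq_mul_inv]

lemma hasDerivAt_arsinh_mul_sqrt (c : ℝ) {x : ℝ} (hx : 0 < x) :
    HasDerivAt (fun t => arsinh (c * √t)) (c / (2 * √x * √(1 + c ^ 2 * x))) x := by
  convert ((hasDerivAt_sqrt hx.ne').const_mul c).arsinh using 1
  rw [mul_pow, sq_sqrt hx.le, smul_eq_mul]
  field_simp

lemma hasDerivAt_sqrt_div_sqrt_affine {a b x : ℝ} (hx : 0 < x) (hy : 0 < a + b * x) :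
    HasDerivAt (fun t => √t / √(a + b * t)) (a / (2 * √x * ((a + b * x) * √(a + b * x)))) x := by
  have haffine : HasDerivAt (fun t => a + b * t) b x := by
    simpa using ((hasDerivAt_id x).const_mul b).const_add a
  refine ((hasDerivAt_sqrt hx.ne').fun_div (haffine.sqrt hy.ne') (by positivity)).congr_deriv ?_
  have hsx : √x ^ 2 = x := sq_sqrt hx.le
  have hsy : √(a + b * x) ^ 2 = a + b * x := sq_sqrt hy.le
  field_simp
  rw [hsx, hsy]
  ring

lemma hasDerivAt_arsinh_sub_sqrt_div_sqrt_affine {a b x : ℝ} (ha : 0 < a) (hb : 0 < b)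
    (hx : 0 < x) :
    HasDerivAt (fun t => 2 / (b * √b) * arsinh (√(b / a) * √t) - 2 / b * (√t / √(a + b * t)))
      (√x / ((a + b * x) * √(a + b * x))) x := by
  have hy : 0 < a + b * x := by positivity
  refine (((hasDerivAt_arsinh_mul_sqrt (√(b / a)) hx).const_mul _).sub
    ((hasDerivAt_sqrt_div_sqrt_affine hx hy).const_mul _)).congr_deriv ?_
  have hsqrt_one_add : √(1 + √(b / a) ^ 2 * x) = √(a + b * x) / √a := by
    rw [sq_sqrt (by positivity), ← sqrt_div hy.le]
    congr 1
    field_simp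
  have hsx : √x ^ 2 = x := sq_sqrt hx.le
  rw [hsqrt_one_add, sqrt_div hb.le]
  field_simp
  rw [hsx]
  ring

theorem integral_sqrt_div_affine_pow_three_halves {a b u : ℝ} (ha : 0 < a) (hb : 0 < b)
    (hu : 0 ≤ u) :
    ∫ x in (0 : ℝ)..u, √x / ((a + b * x) * √(a + b * x))
      = 2 / (b * √b) * arsinh (√(b / a) * √u) - 2 / b * (√u / √(a + b * u)) := by
  have hy : ∀ x ∈ Icc 0 u, 0 < a + b * x := fun x hx => by
    have hx₀ := hx.1
    positivity
  rw [intervalIntegral.integral_eq_sub_of_hasDerivAt_of_le hu _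
    (fun x hx => hasDerivAt_arsinh_sub_sqrt_div_sqrt_affine ha hb hx.1) _]
  · simp
  · refine .sub ((Continuous.arsinh (by fun_prop)).continuousOn.const_mul _) ?_
    fun_prop (disch := exact fun x hx => (sqrt_pos.2 (hy x hx)).ne')
  · refine ContinuousOn.intervalIntegrable_of_Icc hu ?_
    fun_prop (disch := exact fun x hx => (mul_pos (hy x hx) (sqrt_pos.2 (hy x hx))).ne')

/-- The mean of the maximin density: for `a, b > 0` with `a√(a+b) = 2` and
`p(x) = (a x^{1/3} + b x^{4/3})^{-3/2}` on `[0,1]`,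
`∫₀¹ x·p(x) dx = −a/b + (a/b)·√(a/b + 1)·ArcSinh(√(b/a))`. -/
theorem stmt_16 (a b : ℝ) (ha : 0 < a) (hb : 0 < b)
    (hnorm : a * Real.sqrt (a + b) = 2) :
    ∫ x in (0 : ℝ)..1,
        x * (a * x ^ ((1 : ℝ) / 3) + b * x ^ ((4 : ℝ) / 3)) ^ (-(3 : ℝ) / 2)
      = -a / b + (a / b) * Real.sqrt (a / b + 1) * Real.arsinh (Real.sqrt (b / a)) := by
  have hintegrand :
      EqOn (fun x => x * (a * x ^ ((1 : ℝ) / 3) + b * x ^ ((4 : ℝ) / 3)) ^ (-(3 : ℝ) / 2))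
      (fun x => √x / ((a + b * x) * √(a + b * x))) (uIcc 0 1) := fun x hx => by
    rw [uIcc_of_le zero_le_one] at hx
    have hx₀ := hx.1
    exact mul_rpow_third_add_rpow_four_thirds hx₀ (by positivity)
  have hsum : √(a + b) = 2 / a := by
    field_simp
    linarith
  have hsqrt : √(a / b + 1) = √(a + b) / √b := by
    rw [← sqrt_div (by positivity)]
    congr 1
    field_simp
  rw [intervalIntegral.integral_congr hintegrand,
    integral_sqrt_div_affine_pow_three_halves ha hb zero_le_one]
  simp only [sqrt_one, mul_one]
  rw [hsqrt, hsum]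
  field_simp
  ring
end

section
/- Define E(r) = −1/r + (√(1/r + 1)/r)·log(√r + √(r+1)) for r > 0. Then for all r > 0, E(r) ≥ (1/3)·(log r)/r, and for all r > 3, E(r) ≤ (1/2)·(log r)/r. -/
/-!
Put `t = arsinh √r`, so that `√r = sinh t`, `√(r + 1) = cosh t` and `log (√r + √(r + 1)) = t`;
then `r E(r) = t coth t - 1` and `log r = 2 log sinh t`. With `w = e^{-t}` one has
`log sinh t = t - log 2 + log (1 - w²)` and `coth t = (1 + w²) / (1 - w²)`, and both bounds become
elementary inequalities in `t` and `w`, closed by the tangent-line bounds `t ≥ 1 - w`,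
`t ≥ 2 - e w` (lower bound) and `t w ≤ 1/e` (upper bound).
-/

open Real

namespace Real

lemma sinh_eq_exp_mul (t : ℝ) : sinh t = exp t * (1 - exp (-t) ^ 2) / 2 := by
  rw [sinh_eq, exp_neg]
  field_simp

lemma cosh_eq_exp_mul (t : ℝ) : cosh t = exp t * (1 + exp (-t) ^ 2) / 2 := by
  rw [cosh_eq, exp_neg]
  field_simp

lemma exp_neg_sq_lt_one {t : ℝ} (ht : 0 < t) : exp (-t) ^ 2 < 1 :=
  pow_lt_one₀ (exp_pos _).le (exp_lt_one_iff.2 (neg_neg_of_pos ht)) two_ne_zero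

lemma log_sinh_eq {t : ℝ} (ht : 0 < t) :
    log (sinh t) = t + log (1 - exp (-t) ^ 2) - log 2 := by
  have hv := exp_neg_sq_lt_one ht
  rw [sinh_eq_exp_mul, log_div (by positivity) two_ne_zero,
    log_mul (exp_pos t).ne' (by linarith), log_exp]

lemma cosh_div_sinh_eq {t : ℝ} (ht : 0 < t) :
    cosh t / sinh t = (1 + exp (-t) ^ 2) / (1 - exp (-t) ^ 2) := by
  have hv := exp_neg_sq_lt_one ht
  rw [sinh_eq_exp_mul, cosh_eq_exp_mul]
  field_simp [(exp_pos t).ne', (by linarith : 1 - exp (-t) ^ 2 ≠ 0)]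

lemma log_sqrt_add_sqrt_add_one {r : ℝ} (hr : 0 ≤ r) : log (√r + √(r + 1)) = arsinh √r := by
  rw [arsinh, sq_sqrt hr, add_comm r 1]

lemma two_div_three_mul_log_sinh_le {t : ℝ} (ht : 0 < t) :
    2 / 3 * log (sinh t) ≤ t * cosh t / sinh t - 1 := by
  set w := exp (-t)
  have hw0 : 0 < w := exp_pos _
  have hv := exp_neg_sq_lt_one ht
  -- `t = -log w` lies above its tangent lines at `w = 1` and at `w = e⁻¹`, and `e < 3`
  have htw : 1 - w ≤ t := by linarith [add_one_le_exp (-t)]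
  have htw' : 2 - 3 * w ≤ t := by
    have h := add_one_le_exp (1 - t)
    rw [sub_eq_add_neg, exp_add] at h
    nlinarith [exp_one_lt_three]
  have hlog : log (1 - w ^ 2) ≤ -w ^ 2 := by
    linarith [log_le_sub_one_of_pos (by linarith : 0 < 1 - w ^ 2)]
  have hcoth : 1 + 2 * w ^ 2 ≤ cosh t / sinh t := by
    rw [cosh_div_sinh_eq ht, le_div_iff₀ (by linarith)]
    nlinarith [sq_nonneg (w ^ 2)]
  have hpoly : 1 - 2 / 3 * log 2 ≤ t / 3 + 2 * t * w ^ 2 + 2 / 3 * w ^ 2 := by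
    nlinarith [log_two_gt_d9, mul_nonneg (sub_nonneg.2 htw) (sq_nonneg w),
      mul_nonneg (sub_nonneg.2 htw') (sq_nonneg w), sq_nonneg (w - 1 / 6)]
  rw [log_sinh_eq ht, mul_div_assoc]
  nlinarith [mul_le_mul_of_nonneg_left hcoth ht.le]

lemma mul_cosh_div_sinh_sub_one_le_log_sinh {t : ℝ} (ht : 0 < t) (h3 : 3 < sinh t ^ 2) :
    t * cosh t / sinh t - 1 ≤ log (sinh t) := by
  set w := exp (-t) with hw
  have hw0 : 0 < w := exp_pos _
  have hv := exp_neg_sq_lt_one ht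
  have hsinh : 1.732 < sinh t := by nlinarith [sinh_pos_iff.2 ht]
  have hcosh : 2 < cosh t := by nlinarith [cosh_sq t, cosh_pos t]
  have hw27 : w ≤ 0.27 := by
    have : exp t * w = 1 := by rw [hw, ← exp_add, add_neg_cancel, exp_zero]
    nlinarith [sinh_add_cosh t]
  have htw : t * w ≤ 0.3678794412 := (mul_exp_neg_le_exp_neg_one t).trans exp_neg_one_lt_d9.le
  have hlog : -w ^ 2 ≤ (1 - w ^ 2) * log (1 - w ^ 2) := by
    have h := mul_le_mul_of_nonneg_left (one_sub_inv_le_log_of_pos (by linarith : 0 < 1 - w ^ 2))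
      (by linarith : 0 ≤ 1 - w ^ 2)
    rwa [mul_sub, mul_one, mul_inv_cancel₀ (by linarith), sub_sub_cancel_left] at h
  have hpoly : 2 * t * w ^ 2 + (2 - log 2) * w ^ 2 ≤ 1 - log 2 := by
    nlinarith [mul_le_mul_of_nonneg_right htw hw0.le,
      mul_le_mul_of_nonneg_right log_two_lt_d9.le (by linarith : 0 ≤ 1 - w ^ 2)]
  rw [log_sinh_eq ht, mul_div_assoc, cosh_div_sinh_eq ht, mul_div_assoc',
    div_sub_one (by linarith), div_le_iff₀ (by linarith)]
  nlinarith

lemma neg_one_div_add_sqrt_mul_log_eq {r : ℝ} (hr : 0 < r) :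
    -1 / r + √(1 / r + 1) / r * log (√r + √(r + 1)) =
      (arsinh √r * cosh (arsinh √r) / sinh (arsinh √r) - 1) / r := by
  have hsqrt : √(1 / r + 1) = √(r + 1) / √r := by
    rw [← sqrt_div (by linarith), add_div, div_self hr.ne', add_comm]
  rw [log_sqrt_add_sqrt_add_one hr.le, sinh_arsinh, cosh_arsinh, sq_sqrt hr.le, add_comm 1 r,
    hsqrt]
  ring

end Real

/-- Bounds on `E(r) = −1/r + (√(1/r + 1)/r)·log(√r + √(r+1))`: for all `r > 0`,
`E(r) ≥ (1/3)(log r)/r`, and for all `r > 3`, `E(r) ≤ (1/2)(log r)/r`. -/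
theorem stmt_17 :
    (∀ r : ℝ, 0 < r →
      (1 / 3) * Real.log r / r
        ≤ -1 / r + (Real.sqrt (1 / r + 1) / r) * Real.log (Real.sqrt r + Real.sqrt (r + 1)))
    ∧ (∀ r : ℝ, 3 < r →
      -1 / r + (Real.sqrt (1 / r + 1) / r) * Real.log (Real.sqrt r + Real.sqrt (r + 1))
        ≤ (1 / 2) * Real.log r / r) := by
  have hlog {r : ℝ} (hr : 0 < r) : log r = 2 * log (sinh (arsinh √r)) := by
    rw [sinh_arsinh, log_sqrt hr.le]
    ring
  have hpos {r : ℝ} (hr : 0 < r) : 0 < arsinh √r := arsinh_pos_iff.2 (sqrt_pos.2 hr)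
  refine ⟨fun r hr ↦ ?_, fun r hr ↦ ?_⟩
  · rw [neg_one_div_add_sqrt_mul_log_eq hr, hlog hr]
    gcongr
    linarith [two_div_three_mul_log_sinh_le (hpos hr)]
  · have hr0 : 0 < r := by linarith
    have h3 : 3 < sinh (arsinh √r) ^ 2 := by rwa [sinh_arsinh, sq_sqrt hr0.le]
    rw [neg_one_div_add_sqrt_mul_log_eq hr0, hlog hr0]
    gcongr
    linarith [mul_cosh_div_sinh_sub_one_le_log_sinh (hpos hr0) h3]
end

section
/- Let X, Z be random probability vectors on Δ_{K-1} with joint distribution arising from Z = z(X) for a measurable quantizer z, and suppose B ∈ 𝓑 is a random variable with A | B distributed according to X = x(B) ∈ Δ_{K-1}, where A takes values in a K-element alphabet. If h : 𝓑 → [M] is a distiller and z(x(b)) = E[X | h(B) = h(b)] for all b, then I(A;B) − I(A;h(B)) = E[D_KL(X ‖ z(X))]. -/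
/-!
Write `p(a,b)` for the joint pmf and `q(a,j) = ∑_{h b = j} p(a,b)` for that of `(A, h(B))`.
Pushing the sum over `j` back to a sum over `b` (each `b` carrying the weight `p(a,b)` of its
fiber), both mutual informations become sums of `p(a,b) · log(·)` over the same index set.
The marginal of `A` cancels in the difference of logarithms, which leaves
`log ((p(a,b)/p(b)) / (q(a,h b)/q(h b))) = log (x(b)_a / z(x(b))_a)`; terms with `p(a,b) = 0`
vanish on both sides.
-/

open Finset Real

theorem Finset.sum_fiberwise_mul {ι κ R : Type*} [Fintype κ] [DecidableEq κ]
    [NonUnitalNonAssocSemiring R] (s : Finset ι) (g : ι → κ) (f : ι → R) (c : κ → R) :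
    ∑ j, (∑ i ∈ s with g i = j, f i) * c j = ∑ i ∈ s, f i * c (g i) := by
  rw [← sum_fiberwise s g fun i => f i * c (g i)]
  refine sum_congr rfl fun j _ => ?_
  rw [sum_mul]
  exact sum_congr rfl fun i hi => by rw [(mem_filter.1 hi).2]

theorem Finset.sum_mul_sum_div_sum_mul {ι R : Type*} [Field R] [LinearOrder R]
    [IsStrictOrderedRing R] (s : Finset ι) {p : ι → R} (hp : ∀ i ∈ s, 0 ≤ p i) (f : ι → R) :
    (∑ i ∈ s, p i) * ∑ i ∈ s, p i / (∑ j ∈ s, p j) * f i = ∑ i ∈ s, p i * f i := by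
  by_cases h0 : ∑ i ∈ s, p i = 0
  · have hzero := (sum_eq_zero_iff_of_nonneg hp).1 h0
    rw [h0, zero_mul]
    exact (sum_eq_zero fun i hi => by rw [hzero i hi, zero_mul]).symm
  · rw [mul_sum]
    exact sum_congr rfl fun i _ => by field_simp

theorem Real.log_div_mul_sub_log_div_mul {p p' q q' c : ℝ} (hp : p ≠ 0) (hp' : p' ≠ 0)
    (hq : q ≠ 0) (hq' : q' ≠ 0) (hc : c ≠ 0) :
    log (p / (c * p')) - log (q / (c * q')) = log (p / p' / (q / q')) := by
  rw [← log_div (by positivity) (by positivity)]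
  congr 1
  field_simp

theorem stmt_18_general (K M : ℕ) {β : Type*} [Fintype β]
    (P : Fin K → β → ℝ) (hP : ∀ a b, 0 ≤ P a b)
    (h : β → Fin M)
    (x : β → Fin K → ℝ) (hx : ∀ b a, x b a = P a b / ∑ a', P a' b)
    (z : (Fin K → ℝ) → Fin K → ℝ)
    (hz : ∀ b a, z (x b) a
        = (∑ b' ∈ Finset.univ.filter fun b' => h b' = h b, P a b')
          / ∑ b' ∈ Finset.univ.filter fun b' => h b' = h b, ∑ a', P a' b') :
    ((∑ a, ∑ b, P a b * Real.log (P a b / ((∑ b', P a b') * ∑ a', P a' b)))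
        - ∑ a, ∑ j : Fin M,
            (∑ b ∈ Finset.univ.filter fun b => h b = j, P a b)
              * Real.log ((∑ b ∈ Finset.univ.filter fun b => h b = j, P a b)
                / ((∑ b', P a b')
                    * ∑ b ∈ Finset.univ.filter fun b => h b = j, ∑ a', P a' b)))
      = ∑ b, (∑ a', P a' b) * ∑ a, x b a * Real.log (x b a / z (x b) a) := by
  have hterm : ∀ a b,
      P a b * log (P a b / ((∑ b', P a b') * ∑ a', P a' b))
        - P a b * log ((∑ b' ∈ univ with h b' = h b, P a b')
            / ((∑ b', P a b') * ∑ b' ∈ univ with h b' = h b, ∑ a', P a' b'))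
        = P a b * log (x b a / z (x b) a) := by
    intro a b
    rcases (hP a b).eq_or_lt with hab | hab
    · simp [← hab]
    have hfiber : b ∈ univ.filter fun b' => h b' = h b := by simp
    have hPb : 0 < ∑ a', P a' b := sum_pos' (fun a' _ => hP a' b) ⟨a, mem_univ a, hab⟩
    rw [← mul_sub, hx, hz, log_div_mul_sub_log_div_mul hab.ne' hPb.ne'
      (sum_pos' (fun b' _ => hP a b') ⟨b, hfiber, hab⟩).ne'
      (sum_pos' (fun b' _ => sum_nonneg fun a' _ => hP a' b') ⟨b, hfiber, hPb⟩).ne'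
      (sum_pos' (fun b' _ => hP a b') ⟨b, mem_univ b, hab⟩).ne']
  calc _ = ∑ a, ∑ b, P a b * log (x b a / z (x b) a) := by
        simp only [sum_fiberwise_mul, ← sum_sub_distrib, hterm]
    _ = _ := by
        rw [sum_comm]
        refine sum_congr rfl fun b _ => ?_
        simpa only [← hx] using
          (sum_mul_sum_div_sum_mul univ (fun a _ => hP a b) fun a => log (x b a / z (x b) a)).symm

/-- Information distillation equals simplex quantization loss: for a joint pmf
`P` of `(A,B)` with `A ∈ Fin K`, a distiller `h : β → Fin M`, conditional
probability vectors `x(b)_a = P[A = a | B = b]`, and a quantizer `z` with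
centroid decoding `z(x(b)) = E[X | h(B) = h(b)]`,
`I(A;B) − I(A;h(B)) = E[D_KL(X ‖ z(X))]`. -/
theorem stmt_18 (K M : ℕ) {β : Type*} [Fintype β]
    (P : Fin K → β → ℝ) (hP : ∀ a b, 0 ≤ P a b) (hPsum : ∑ a, ∑ b, P a b = 1)
    (h : β → Fin M)
    (x : β → Fin K → ℝ) (hx : ∀ b a, x b a = P a b / ∑ a', P a' b)
    (z : (Fin K → ℝ) → Fin K → ℝ)
    (hz : ∀ b a, z (x b) a
        = (∑ b' ∈ Finset.univ.filter fun b' => h b' = h b, P a b')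
          / ∑ b' ∈ Finset.univ.filter fun b' => h b' = h b, ∑ a', P a' b') :
    ((∑ a, ∑ b, P a b * Real.log (P a b / ((∑ b', P a b') * ∑ a', P a' b)))
        - ∑ a, ∑ j : Fin M,
            (∑ b ∈ Finset.univ.filter fun b => h b = j, P a b)
              * Real.log ((∑ b ∈ Finset.univ.filter fun b => h b = j, P a b)
                / ((∑ b', P a b')
                    * ∑ b ∈ Finset.univ.filter fun b => h b = j, ∑ a', P a' b)))
      = ∑ b, (∑ a', P a' b) * ∑ a, x b a * Real.log (x b a / z (x b) a) :=
  stmt_18_general K M P hP h x hx z hz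
end
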